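/- Chernoff's theorem on proper families: Let E be a real Banach space, let (T_t)_{t≥0} be a strongly continuous semigroup of bounded linear operators on E (T_0 = id, T_{s+t} = T_s ∘ T_t, and t ↦ T_t u is continuous for every u ∈ E), and let D := { u ∈ E : the limit L u := lim_{t→0+} (u − T_t u)/t exists } be its generator domain, assumed dense in E. Let (P_t)_{t≥0} be a family of bounded linear operators on E such that: (i) there are constants C, δ > 0 with ‖P_t‖ ≤ 1 + C·t for all 0 ≤ t ≤ δ; (ii) the family is strongly continuous with P_0 = id (i.e. t ↦ P_t u is continuous for every u ∈ E); (iii) for every u of the form u = T_ε v with ε > 0 and v ∈ D, one has (P_t u − u)/t → −L u as t → 0+. Then for every u ∈ E and every t > 0, and for any sequence of partitions τ = {0 = τ_0 < τ_1 < ⋯ < τ_N = t} of [0,t] whose mesh max_j (τ_j − τ_{j−1}) tends to zero, the compositions P_{τ_1−τ_0} ∘ P_{τ_2−τ_1} ∘ ⋯ ∘ P_{τ_N−τ_{N−1}} applied to u converge in E to T_t u. -/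

import Mathlib

/-!
Let `F k` be the product of the `P` over the `k`-th partition. As `‖P s‖ ≤ 1 + C s ≤ exp (C s)`,
the `F k` are eventually bounded by `exp (C t)`, so it suffices to prove convergence on the dense
set of vectors `w = T ε v` with `ε > 0` and `v ∈ D`. For such `w`, telescoping against
`T t = T d₁ ∘ ⋯ ∘ T d_N` bounds `‖F k w - T t w‖` by `exp (C t) · t` times
`sup ‖(P s - T s) (T ρ w)‖ / s` over `s ≤ mesh` and `ρ ∈ [0, t]`. This supremum tends to zero:
`s⁻¹ (P s - T s) T ε` tends to zero pointwise on the graph of the generator, which is closed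
(`v - T h v = ∫₀ʰ T r (L v) dr`) and hence a Banach space. By Banach–Steinhaus these operators
are bounded near `s = 0`, so the convergence is uniform on the compact orbit
`ρ ↦ (T ρ v, T ρ (L v))`.
-/

open Filter Topology Set

section OperatorFamilies

variable {F G : Type*} [NormedAddCommGroup F] [NormedSpace ℝ F]
  [NormedAddCommGroup G] [NormedSpace ℝ G] {ι : Type*} {l : Filter ι} {A : ι → F →L[ℝ] G}

theorem exists_eventually_opNorm_le_of_tendsto [CompleteSpace F] [l.IsCountablyGenerated]
    {B : F → G} (h : ∀ x, Tendsto (A · x) l (𝓝 (B x))) : ∃ Γ, ∀ᶠ i in l, ‖A i‖ ≤ Γ := by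
  by_contra! hA
  obtain ⟨s, hs⟩ := l.exists_antitone_basis
  have hseq : ∀ n : ℕ, ∃ i ∈ s n, (n : ℝ) < ‖A i‖ := fun n =>
    ((hA n).and_eventually (hs.mem n)).exists.imp fun _ hi => ⟨hi.2, hi.1⟩
  choose i hi hAi using hseq
  obtain ⟨Γ, hΓ⟩ := banach_steinhaus (g := fun n => A (i n)) fun x => by
    obtain ⟨C, hC⟩ := ((h x).comp (hs.tendsto hi)).norm.bddAbove_range
    exact ⟨C, fun n => hC ⟨n, rfl⟩⟩
  obtain ⟨n, hn⟩ := exists_nat_gt Γ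
  exact (hAi n).not_ge ((hΓ n).trans hn.le)

theorem eventually_forall_mem_norm_apply_le {Γ : ℝ} (hΓ : ∀ᶠ i in l, ‖A i‖ ≤ Γ)
    (h : ∀ x, Tendsto (A · x) l (𝓝 0)) {K : Set F} (hK : IsCompact K) {η : ℝ} (hη : 0 < η) :
    ∀ᶠ i in l, ∀ x ∈ K, ‖A i x‖ ≤ η := by
  set r := η / (2 * (|Γ| + 1))
  have hr : 0 < r := by positivity
  obtain ⟨c, -, hc, hKc⟩ := finite_cover_balls_of_compact hK hr
  have hcenters : ∀ᶠ i in l, ∀ y ∈ c, ‖A i y‖ ≤ η / 2 := (eventually_all_finite hc).2 fun y _ =>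
    (tendsto_norm_zero.comp (h y)).eventually (ge_mem_nhds (half_pos hη))
  filter_upwards [hΓ, hcenters] with i hi hci x hx
  obtain ⟨y, hy, hxy⟩ := mem_iUnion₂.1 (hKc hx)
  have hrΓ : |Γ| * r ≤ η / 2 := by
    rw [mul_div_assoc', div_le_div_iff₀ (by positivity) two_pos]
    nlinarith [abs_nonneg Γ]
  calc ‖A i x‖ = ‖A i (x - y) + A i y‖ := by rw [map_sub, sub_add_cancel]
    _ ≤ Γ * ‖x - y‖ + η / 2 := norm_add_le_of_le ((A i).le_of_opNorm_le hi _) (hci y hy)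
    _ ≤ |Γ| * r + η / 2 := by
      refine add_le_add ?_ le_rfl
      exact (mul_le_mul_of_nonneg_right (le_abs_self Γ) (norm_nonneg _)).trans
        (mul_le_mul_of_nonneg_left (mem_ball_iff_norm.1 hxy).le (abs_nonneg Γ))
    _ ≤ η := by linarith

theorem tendsto_apply_of_dense {B : F →L[ℝ] G} {M : ℝ} (hM : ∀ᶠ i in l, ‖A i‖ ≤ M) {S : Set F}
    (hS : Dense S) (h : ∀ x ∈ S, Tendsto (A · x) l (𝓝 (B x))) (x : F) :
    Tendsto (A · x) l (𝓝 (B x)) := by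
  refine Metric.tendsto_nhds.2 fun ε hε => ?_
  set c := |M| + ‖B‖ + 1
  obtain ⟨y, hy, hxy⟩ := Metric.mem_closure_iff.1 (hS x) (ε / (2 * c)) (by positivity)
  have hcxy : c * dist x y < ε / 2 := by
    rw [lt_div_iff₀ (by positivity : (0:ℝ) < 2 * c)] at hxy
    linarith
  filter_upwards [hM, Metric.tendsto_nhds.1 (h y hy) (ε / 2) (half_pos hε)] with i hi hiy
  calc dist (A i x) (B x) ≤ dist (A i x) (A i y) + dist (A i y) (B y) + dist (B y) (B x) :=
        dist_triangle4 _ _ _ _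
    _ ≤ |M| * dist x y + ε / 2 + ‖B‖ * dist x y := by
      refine add_le_add (add_le_add (((A i).dist_le_opNorm x y).trans ?_) hiy.le) ?_
      · exact mul_le_mul_of_nonneg_right (hi.trans (le_abs_self M)) dist_nonneg
      · rw [dist_comm x y]; exact B.dist_le_opNorm y x
    _ < ε := by nlinarith [dist_nonneg (x := x) (y := y)]

end OperatorFamilies

theorem Fin.sum_succ_sub_castSucc {G : Type*} [AddCommGroup G] {n : ℕ} (τ : Fin (n + 1) → G) :
    ∑ j : Fin n, (τ j.succ - τ j.castSucc) = τ (Fin.last n) - τ 0 := by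
  induction n with
  | zero => simp
  | succ n ih =>
    rw [Fin.sum_univ_castSucc, show ∑ i : Fin n, (τ i.castSucc.succ - τ i.castSucc.castSucc) = _
      from ih (fun j => τ j.castSucc), Fin.succ_last, Fin.castSucc_zero]
    abel

def increments {n : ℕ} (τ : Fin (n + 1) → ℝ) : List ℝ :=
  List.ofFn fun j : Fin n => τ j.succ - τ j.castSucc

theorem sum_increments {n : ℕ} (τ : Fin (n + 1) → ℝ) :
    (increments τ).sum = τ (Fin.last n) - τ 0 := by
  rw [increments, List.sum_ofFn, Fin.sum_succ_sub_castSucc]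

theorem StrictMono.pos_of_mem_increments {n : ℕ} {τ : Fin (n + 1) → ℝ} (hτ : StrictMono τ)
    {d : ℝ} (hd : d ∈ increments τ) : 0 < d := by
  obtain ⟨j, rfl⟩ := List.mem_ofFn.1 hd
  exact sub_pos.2 (hτ j.castSucc_lt_succ)

theorem le_iSup_of_mem_increments {n : ℕ} {τ : Fin (n + 1) → ℝ} {d : ℝ}
    (hd : d ∈ increments τ) : d ≤ ⨆ j : Fin n, (τ j.succ - τ j.castSucc) := by
  obtain ⟨j, rfl⟩ := List.mem_ofFn.1 hd
  exact le_ciSup (f := fun j : Fin n => τ j.succ - τ j.castSucc) (Set.finite_range _).bddAbove j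

section Products

variable {E : Type*} [NormedAddCommGroup E] [NormedSpace ℝ E]

theorem opNorm_foldr_comp_le {P : ℝ → E →L[ℝ] E} {C : ℝ} {l : List ℝ}
    (hP : ∀ d ∈ l, ‖P d‖ ≤ Real.exp (C * d)) :
    ‖(l.map P).foldr (· ∘L ·) (ContinuousLinearMap.id ℝ E)‖ ≤ Real.exp (C * l.sum) := by
  induction l with
  | nil => simpa using ContinuousLinearMap.norm_id_le
  | cons d l ih =>
    rw [List.map_cons, List.foldr_cons, List.sum_cons, mul_add, Real.exp_add]
    exact (ContinuousLinearMap.opNorm_comp_le _ _).trans <| mul_le_mul (hP d (by simp))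
      (ih fun e he => hP e (by simp [he])) (norm_nonneg _) (Real.exp_nonneg _)

theorem eventually_opNorm_foldr_comp_le {P : ℝ → E →L[ℝ] E} {C δ t : ℝ}
    (hP : ∀ s ∈ Ioc 0 δ, ‖P s‖ ≤ Real.exp (C * s)) {ℓ : ℕ → List ℝ} (hsum : ∀ k, (ℓ k).sum = t)
    (hpos : ∀ k, ∀ d ∈ ℓ k, 0 < d) (hmesh : ∀ᶠ k in atTop, ∀ d ∈ ℓ k, d ≤ δ) :
    ∀ᶠ k in atTop, ‖((ℓ k).map P).foldr (· ∘L ·) (ContinuousLinearMap.id ℝ E)‖ ≤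
      Real.exp (C * t) :=
  hmesh.mono fun k hk => hsum k ▸ opNorm_foldr_comp_le fun d hd => hP d ⟨hpos k d hd, hk d hd⟩

end Products

section Semigroup

variable {E : Type*} [NormedAddCommGroup E] [NormedSpace ℝ E]

structure IsStronglyContinuousSemigroup (T : ℝ → E →L[ℝ] E) : Prop where
  map_zero : T 0 = ContinuousLinearMap.id ℝ E
  map_add : ∀ s t : ℝ, 0 ≤ s → 0 ≤ t → T (s + t) = (T s).comp (T t)
  continuousOn : ∀ u : E, ContinuousOn (fun t => T t u) (Ici 0)

def generatorGraph (T : ℝ → E →L[ℝ] E) : Submodule ℝ (E × E) where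
  carrier := {q | Tendsto (fun s : ℝ => s⁻¹ • (q.1 - T s q.1)) (𝓝[>] 0) (𝓝 q.2)}
  add_mem' {q r} hq hr := by
    simp only [mem_ofPred_eq] at hq hr ⊢
    simpa only [Prod.fst_add, Prod.snd_add, map_add, add_sub_add_comm, smul_add] using hq.add hr
  zero_mem' := by simp
  smul_mem' c q hq := by
    simp only [mem_ofPred_eq] at hq ⊢
    simpa only [Prod.smul_fst, Prod.smul_snd, map_smul, ← smul_sub, smul_comm c] using
      hq.const_smul c

theorem mem_generatorGraph {T : ℝ → E →L[ℝ] E} {q : E × E} :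
    q ∈ generatorGraph T ↔
      Tendsto (fun s : ℝ => s⁻¹ • (q.1 - T s q.1)) (𝓝[>] 0) (𝓝 q.2) := Iff.rfl

namespace IsStronglyContinuousSemigroup

variable {T P : ℝ → E →L[ℝ] E} (hT : IsStronglyContinuousSemigroup T)
include hT

theorem apply_comm {a b : ℝ} (ha : 0 ≤ a) (hb : 0 ≤ b) (x : E) :
    T a (T b x) = T b (T a x) := by
  rw [← ContinuousLinearMap.comp_apply, ← hT.map_add a b ha hb, add_comm, hT.map_add b a hb ha,
    ContinuousLinearMap.comp_apply]

theorem tendsto_nhdsGT_zero (x : E) : Tendsto (fun s => T s x) (𝓝[>] 0) (𝓝 x) := by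
  have := (hT.continuousOn x).continuousWithinAt self_mem_Ici
  simpa [ContinuousWithinAt, hT.map_zero] using
    this.mono_left (nhdsWithin_mono _ Ioi_subset_Ici_self)

theorem map_mem_generatorGraph {a : ℝ} (ha : 0 ≤ a) {q : E × E} (hq : q ∈ generatorGraph T) :
    (T a q.1, T a q.2) ∈ generatorGraph T := by
  refine (((T a).continuous.tendsto _).comp hq).congr' ?_
  filter_upwards [self_mem_nhdsWithin] with s hs
  simp [hT.apply_comm ha (le_of_lt hs)]

theorem hasDerivWithinAt_sub_apply {q : E × E} (hq : q ∈ generatorGraph T) {r : ℝ}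
    (hr : 0 ≤ r) :
    HasDerivWithinAt (fun s => q.1 - T s q.1) (T r q.2) (Ioi r) r := by
  rw [hasDerivWithinAt_iff_tendsto_slope' (by simp)]
  have hshift : Tendsto (fun y => y - r) (𝓝[>] r) (𝓝[>] 0) := by
    refine tendsto_nhdsWithin_iff.2 ⟨?_, ?_⟩
    · simpa using ((continuous_sub_right r).tendsto r).mono_left nhdsWithin_le_nhds
    · filter_upwards [self_mem_nhdsWithin] with y (hy : r < y) using sub_pos.2 hy
  refine (((T r).continuous.tendsto _).comp (hq.comp hshift)).congr' ?_
  filter_upwards [self_mem_nhdsWithin] with y (hy : r < y)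
  have hy' : T y = (T r).comp (T (y - r)) := by
    rw [← hT.map_add r (y - r) hr (sub_pos.2 hy).le, add_sub_cancel]
  simp [slope_def_module, hy', map_sub]

theorem intervalIntegrable_apply (x : E) {h : ℝ} (hh : 0 ≤ h) :
    IntervalIntegrable (fun r => T r x) MeasureTheory.volume 0 h :=
  ((hT.continuousOn x).mono fun _ hr => le_trans (le_min le_rfl hh) hr.1).intervalIntegrable

theorem norm_foldr_comp_apply_sub_le {C η : ℝ} (hC : 0 ≤ C) (hη : 0 ≤ η) {w : E} {l : List ℝ}
    (hl : ∀ d ∈ l, 0 ≤ d) (hP : ∀ d ∈ l, ‖P d‖ ≤ Real.exp (C * d))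
    (hkick : ∀ d ∈ l, ∀ ρ ∈ Icc 0 l.sum, ‖P d (T ρ w) - T d (T ρ w)‖ ≤ η * d) :
    ‖(l.map P).foldr (· ∘L ·) (ContinuousLinearMap.id ℝ E) w - T l.sum w‖ ≤
      Real.exp (C * l.sum) * (η * l.sum) := by
  induction l with
  | nil => simp [hT.map_zero]
  | cons d l ih =>
    simp only [List.mem_cons, forall_eq_or_imp, List.sum_cons] at hl hP hkick
    have hs : 0 ≤ l.sum := List.sum_nonneg hl.2
    set R := (l.map P).foldr (· ∘L ·) (ContinuousLinearMap.id ℝ E) w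
    have hR : ‖R - T l.sum w‖ ≤ Real.exp (C * l.sum) * (η * l.sum) :=
      ih hl.2 hP.2 fun e he ρ hρ => hkick.2 e he ρ ⟨hρ.1, hρ.2.trans (by linarith [hl.1])⟩
    have hsplit : P d R - T (d + l.sum) w =
        P d (R - T l.sum w) + (P d (T l.sum w) - T d (T l.sum w)) := by
      rw [hT.map_add d l.sum hl.1 hs, map_sub]
      simp
    have hexp : 1 ≤ Real.exp (C * (d + l.sum)) :=
      Real.one_le_exp (mul_nonneg hC (add_nonneg hl.1 hs))
    simp only [List.map_cons, List.foldr_cons, List.sum_cons, ContinuousLinearMap.comp_apply]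
    calc ‖P d R - T (d + l.sum) w‖
        ≤ Real.exp (C * d) * (Real.exp (C * l.sum) * (η * l.sum)) + η * d := by
          rw [hsplit]
          exact norm_add_le_of_le ((P d).le_of_opNorm_le hP.1 _ |>.trans
            (mul_le_mul_of_nonneg_left hR (Real.exp_nonneg _))) (hkick.1 l.sum ⟨hs, by linarith⟩)
      _ = Real.exp (C * (d + l.sum)) * (η * l.sum) + η * d := by
          rw [mul_add C, Real.exp_add]; ring
      _ ≤ Real.exp (C * (d + l.sum)) * (η * l.sum) + Real.exp (C * (d + l.sum)) * (η * d) :=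
          add_le_add_right (le_mul_of_one_le_left (mul_nonneg hη hl.1) hexp) _
      _ = Real.exp (C * (d + l.sum)) * (η * (d + l.sum)) := by ring

theorem tendsto_foldr_comp_apply {C δ : ℝ} (hC : 0 ≤ C) (hδ : 0 < δ)
    (hPexp : ∀ s ∈ Ioc 0 δ, ‖P s‖ ≤ Real.exp (C * s)) {t : ℝ} {ℓ : ℕ → List ℝ}
    (hsum : ∀ k, (ℓ k).sum = t) (hpos : ∀ k, ∀ d ∈ ℓ k, 0 < d)
    (hmesh : ∀ s > 0, ∀ᶠ k in atTop, ∀ d ∈ ℓ k, d ≤ s) {w : E}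
    (hkick : ∀ η > 0, ∀ᶠ s in 𝓝[>] 0, ∀ ρ ∈ Icc 0 t, ‖P s (T ρ w) - T s (T ρ w)‖ ≤ η * s) :
    Tendsto (fun k => ((ℓ k).map P).foldr (· ∘L ·) (ContinuousLinearMap.id ℝ E) w) atTop
      (𝓝 (T t w)) := by
  have ht : 0 ≤ t := hsum 0 ▸ List.sum_nonneg fun d hd => (hpos 0 d hd).le
  refine Metric.tendsto_atTop.2 fun ε hε => ?_
  set η := ε / (2 * (Real.exp (C * t) * t + 1))
  have hη : 0 < η := by positivity
  obtain ⟨s₀, hs₀, hs₀kick⟩ := mem_nhdsGT_iff_exists_Ioc_subset.1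
    ((hkick η hη).and (Ioc_mem_nhdsGT hδ))
  obtain ⟨K, hK⟩ := eventually_atTop.1 (hmesh s₀ hs₀)
  refine ⟨K, fun k hk => ?_⟩
  have hd : ∀ d ∈ ℓ k, d ∈ Ioc 0 s₀ := fun d hd => ⟨hpos k d hd, hK k hk d hd⟩
  rw [dist_eq_norm, ← hsum k]
  refine (hT.norm_foldr_comp_apply_sub_le hC hη.le (fun d h => (hd d h).1.le)
    (fun d h => hPexp d (hs₀kick (hd d h)).2)
    fun d h ρ hρ => (hs₀kick (hd d h)).1 ρ (hsum k ▸ hρ)).trans_lt ?_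
  rw [hsum k, ← mul_assoc, mul_comm _ η, mul_assoc]
  calc η * (Real.exp (C * t) * t) < η * (2 * (Real.exp (C * t) * t + 1)) := by
        have := mul_nonneg (Real.exp_pos (C * t)).le ht
        exact mul_lt_mul_of_pos_left (by linarith) hη
    _ = ε := div_mul_cancel₀ _ (by positivity)

variable [CompleteSpace E]

theorem exists_opNorm_le (b : ℝ) : ∃ M, ∀ s ∈ Icc 0 b, ‖T s‖ ≤ M := by
  have hbdd : ∀ x : E, ∃ C, ∀ s : Icc (0 : ℝ) b, ‖T s x‖ ≤ C := fun x => by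
    obtain ⟨C, hC⟩ := isCompact_Icc.exists_bound_of_continuousOn
      ((hT.continuousOn x).mono Icc_subset_Ici_self)
    exact ⟨C, fun s => hC s s.2⟩
  obtain ⟨M, hM⟩ := banach_steinhaus hbdd
  exact ⟨M, fun s hs => hM ⟨s, hs⟩⟩

theorem sub_eq_integral {q : E × E} (hq : q ∈ generatorGraph T) {h : ℝ} (hh : 0 ≤ h) :
    q.1 - T h q.1 = ∫ r in 0..h, T r q.2 := by
  have hcont : ContinuousOn (fun s => q.1 - T s q.1) (uIcc 0 h) :=
    continuousOn_const.sub
      ((hT.continuousOn q.1).mono (by simp [uIcc_of_le hh, Icc_subset_Ici_self]))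
  rw [intervalIntegral.integral_eq_sub_of_hasDeriv_right hcont
    (fun r hr => hT.hasDerivWithinAt_sub_apply hq (by rw [min_eq_left hh] at hr; exact hr.1.le))
    (hT.intervalIntegrable_apply q.2 hh)]
  simp [hT.map_zero]

theorem mem_generatorGraph_of_eq_integral {z g : E}
    (hz : ∀ s, 0 < s → z - T s z = ∫ r in 0..s, T r g) : (z, g) ∈ generatorGraph T := by
  have hcont : ContinuousOn (fun r => T r g) (Ioi 0) :=
    (hT.continuousOn g).mono Ioi_subset_Ici_self
  have hderiv := intervalIntegral.integral_hasDerivWithinAt_right (s := Ici 0)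
    (IntervalIntegrable.refl (a := 0))
    (hcont.stronglyMeasurableAtFilter_nhdsWithin measurableSet_Ioi 0)
    ((hT.continuousOn g).continuousWithinAt self_mem_Ici |>.mono Ioi_subset_Ici_self)
  rw [hasDerivWithinAt_iff_tendsto_slope, Ici_sdiff_left, hT.map_zero] at hderiv
  refine hderiv.congr' ?_
  filter_upwards [self_mem_nhdsWithin] with s (hs : 0 < s)
  simp [slope_def_module, hz s hs]

theorem isClosed_generatorGraph : IsClosed (generatorGraph T : Set (E × E)) := by
  refine IsSeqClosed.isClosed fun q z hq hlim => ?_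
  have h1 : Tendsto (fun n => (q n).1) atTop (𝓝 z.1) := (continuous_fst.tendsto z).comp hlim
  have h2 : Tendsto (fun n => (q n).2) atTop (𝓝 z.2) := (continuous_snd.tendsto z).comp hlim
  refine hT.mem_generatorGraph_of_eq_integral fun h hh => tendsto_nhds_unique
    (f := fun n => (q n).1 - T h (q n).1) (h1.sub (((T h).continuous.tendsto _).comp h1)) ?_
  obtain ⟨M, hM⟩ := hT.exists_opNorm_le h
  simp_rw [fun n => hT.sub_eq_integral (hq n) hh.le]
  refine tendsto_iff_norm_sub_tendsto_zero.2 (squeeze_zero (fun _ => norm_nonneg _) (fun n => ?_)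
    (by simpa using ((tendsto_iff_norm_sub_tendsto_zero.1 h2).const_mul (M * h))))
  rw [← intervalIntegral.integral_sub (hT.intervalIntegrable_apply _ hh.le)
    (hT.intervalIntegrable_apply _ hh.le)]
  refine (intervalIntegral.norm_integral_le_of_norm_le_const (C := M * ‖(q n).2 - z.2‖)
    fun r hr => ?_).trans_eq (by rw [sub_zero, abs_of_pos hh]; ring)
  rw [uIoc_of_le hh.le] at hr
  simpa only [← map_sub] using (T r).le_of_opNorm_le (hM r (Ioc_subset_Icc_self hr)) _

theorem eventually_norm_sub_apply_le_mul {ε : ℝ} (hε : 0 ≤ ε)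
    (hP : ∀ q ∈ generatorGraph T,
      Tendsto (fun s : ℝ => s⁻¹ • (P s (T ε q.1) - T s (T ε q.1))) (𝓝[>] 0) (𝓝 0))
    {q : E × E} (hq : q ∈ generatorGraph T) (t : ℝ) {η : ℝ} (hη : 0 < η) :
    ∀ᶠ s in 𝓝[>] 0, ∀ ρ ∈ Icc 0 t, ‖P s (T ρ (T ε q.1)) - T s (T ρ (T ε q.1))‖ ≤ η * s := by
  set p := generatorGraph T
  have : CompleteSpace p := hT.isClosed_generatorGraph.completeSpace_coe
  let A : ℝ → p →L[ℝ] E := fun s =>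
    s⁻¹ • (P s - T s) ∘L T ε ∘L ContinuousLinearMap.fst ℝ E E ∘L p.subtypeL
  have hA : ∀ x, Tendsto (A · x) (𝓝[>] 0) (𝓝 0) := fun x => by simpa [A] using hP x x.2
  obtain ⟨Γ, hΓ⟩ := exists_eventually_opNorm_le_of_tendsto hA
  let orbit : Icc (0 : ℝ) t → p := fun ρ =>
    ⟨(T ρ q.1, T ρ q.2), hT.map_mem_generatorGraph ρ.2.1 hq⟩
  have horbit : Continuous orbit := by
    refine Continuous.subtype_mk (Continuous.prodMk ?_ ?_) _ <;>
      exact ((hT.continuousOn _).mono Icc_subset_Ici_self).domRestrict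
  filter_upwards [eventually_forall_mem_norm_apply_le hΓ hA (isCompact_range horbit) hη,
    self_mem_nhdsWithin] with s hs (hs0 : 0 < s) ρ hρ
  have := hs _ (mem_range_self ⟨ρ, hρ⟩)
  simp only [A, orbit, FunLike.coe_smul, Pi.smul_apply, ContinuousLinearMap.comp_apply,
    Submodule.subtypeL_apply, ContinuousLinearMap.coe_fst', FunLike.coe_sub, Pi.sub_apply,
    norm_smul, norm_inv, Real.norm_of_nonneg hs0.le] at this
  rw [hT.apply_comm hρ.1 hε, mul_comm]
  exact (inv_mul_le_iff₀ hs0).1 this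

end IsStronglyContinuousSemigroup

end Semigroup

theorem chernoff_proper_family_general
    {E : Type*} [NormedAddCommGroup E] [NormedSpace ℝ E] [CompleteSpace E]
    (T : ℝ → E →L[ℝ] E)
    (hT0 : T 0 = ContinuousLinearMap.id ℝ E)
    (hTsemigroup : ∀ s t : ℝ, 0 ≤ s → 0 ≤ t → T (s + t) = (T s).comp (T t))
    (hTcont : ∀ u : E, ContinuousOn (fun t => T t u) (Set.Ici (0 : ℝ)))
    (D : Set E) (L : E → E)
    (hD : D = {u : E | ∃ w : E,
      Tendsto (fun t : ℝ => t⁻¹ • (u - T t u)) (𝓝[>] (0 : ℝ)) (𝓝 w)})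
    (hL : ∀ u ∈ D,
      Tendsto (fun t : ℝ => t⁻¹ • (u - T t u)) (𝓝[>] (0 : ℝ)) (𝓝 (L u)))
    (hDdense : Dense D)
    (P : ℝ → E →L[ℝ] E)
    (C δ : ℝ) (hC : 0 < C) (hδ : 0 < δ)
    (hPnorm : ∀ t : ℝ, 0 ≤ t → t ≤ δ → ‖P t‖ ≤ 1 + C * t)
    (hPgenerator : ∀ ε : ℝ, 0 < ε → ∀ v ∈ D,
      Tendsto (fun t : ℝ => t⁻¹ • (P t (T ε v) - T ε v)) (𝓝[>] (0 : ℝ))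
        (𝓝 (-(L (T ε v)))))
    (u : E) (t : ℝ)
    (N : ℕ → ℕ)
    (τ : (k : ℕ) → Fin (N k + 1) → ℝ)
    (hτmono : ∀ k, StrictMono (τ k))
    (hτ0 : ∀ k, τ k 0 = 0)
    (hτlast : ∀ k, τ k (Fin.last (N k)) = t)
    (hmesh : Tendsto
      (fun k => ⨆ j : Fin (N k), (τ k j.succ - τ k j.castSucc)) atTop (𝓝 0)) :
    Tendsto
      (fun k =>
        ((List.ofFn (fun j : Fin (N k) => P (τ k j.succ - τ k j.castSucc))).foldr
          (· ∘L ·) (ContinuousLinearMap.id ℝ E)) u)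
      atTop (𝓝 (T t u)) := by
  have hT : IsStronglyContinuousSemigroup T := ⟨hT0, hTsemigroup, hTcont⟩
  have hmemD : ∀ q ∈ generatorGraph T, q.1 ∈ D := fun q hq => hD ▸ ⟨q.2, mem_generatorGraph.1 hq⟩
  have hPkick : ∀ ε > 0, ∀ q ∈ generatorGraph T,
      Tendsto (fun s : ℝ => s⁻¹ • (P s (T ε q.1) - T s (T ε q.1))) (𝓝[>] 0) (𝓝 0) :=
    fun ε hε q hq => by
      simpa [← smul_add] using (hPgenerator ε hε q.1 (hmemD q hq)).add
        (hL _ (hmemD _ (hT.map_mem_generatorGraph hε.le hq)))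
  have hPexp : ∀ s ∈ Ioc 0 δ, ‖P s‖ ≤ Real.exp (C * s) := fun s hs =>
    (hPnorm s hs.1.le hs.2).trans (by linarith [Real.add_one_le_exp (C * s)])
  have hsum : ∀ k, (increments (τ k)).sum = t := fun k => by
    rw [sum_increments, hτlast, hτ0, sub_zero]
  have hmesh' : ∀ s > 0, ∀ᶠ k in atTop, ∀ d ∈ increments (τ k), d ≤ s := fun s hs =>
    (hmesh.eventually (gt_mem_nhds hs)).mono fun k hk d hd =>
      (le_iSup_of_mem_increments hd).trans hk.le
  have hpos : ∀ k, ∀ d ∈ increments (τ k), 0 < d := fun k _ hd =>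
    (hτmono k).pos_of_mem_increments hd
  let S := {w | ∃ ε > 0, ∃ v ∈ D, w = T ε v}
  have hS : Dense S := dense_closure.1 <| hDdense.mono fun v hv =>
    mem_closure_of_tendsto (hT.tendsto_nhdsGT_zero v)
      (eventually_mem_nhdsWithin.mono fun ε hε => ⟨ε, hε, v, hv, rfl⟩)
  have hofFn : ∀ k, List.ofFn (fun j : Fin (N k) => P (τ k j.succ - τ k j.castSucc)) =
      (increments (τ k)).map P := fun k => by rw [increments, List.map_ofFn]; rfl
  simp_rw [hofFn]
  refine tendsto_apply_of_dense (eventually_opNorm_foldr_comp_le hPexp hsum hpos (hmesh' δ hδ))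
    hS ?_ u
  rintro _ ⟨ε, hε, v, hv, rfl⟩
  exact hT.tendsto_foldr_comp_apply hC.le hδ hPexp hsum hpos hmesh' fun η hη =>
    hT.eventually_norm_sub_apply_le_mul hε.le (hPkick ε hε) (q := (v, L v))
      (mem_generatorGraph.2 (hL v hv)) t hη

/-- **Chernoff's theorem on proper families.** If `(T t)` is a strongly continuous
semigroup on a Banach space `E` with densely defined generator `L` (with domain `D`),
and `(P t)` is a proper family, i.e. `‖P t‖ ≤ 1 + C t` near `0`, `P` is strongly
continuous with `P 0 = id`, and `(P t u - u)/t → -L u` for all `u = T ε v`, `ε > 0`,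
`v ∈ D`, then for any sequence of partitions of `[0, t]` whose mesh tends to zero,
the compositions `P (τ₁ - τ₀) ∘ ⋯ ∘ P (τ_N - τ_{N-1})` applied to `u` converge to
`T t u`. -/
theorem chernoff_proper_family
    {E : Type*} [NormedAddCommGroup E] [NormedSpace ℝ E] [CompleteSpace E]
    (T : ℝ → E →L[ℝ] E)
    (hT0 : T 0 = ContinuousLinearMap.id ℝ E)
    (hTsemigroup : ∀ s t : ℝ, 0 ≤ s → 0 ≤ t → T (s + t) = (T s).comp (T t))
    (hTcont : ∀ u : E, ContinuousOn (fun t => T t u) (Set.Ici (0 : ℝ)))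
    (D : Set E) (L : E → E)
    (hD : D = {u : E | ∃ w : E,
      Tendsto (fun t : ℝ => t⁻¹ • (u - T t u)) (𝓝[>] (0 : ℝ)) (𝓝 w)})
    (hL : ∀ u ∈ D,
      Tendsto (fun t : ℝ => t⁻¹ • (u - T t u)) (𝓝[>] (0 : ℝ)) (𝓝 (L u)))
    (hDdense : Dense D)
    (P : ℝ → E →L[ℝ] E)
    (C δ : ℝ) (hC : 0 < C) (hδ : 0 < δ)
    (hPnorm : ∀ t : ℝ, 0 ≤ t → t ≤ δ → ‖P t‖ ≤ 1 + C * t)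
    (hP0 : P 0 = ContinuousLinearMap.id ℝ E)
    (hPcont : ∀ u : E, ContinuousOn (fun t => P t u) (Set.Ici (0 : ℝ)))
    (hPgenerator : ∀ ε : ℝ, 0 < ε → ∀ v ∈ D,
      Tendsto (fun t : ℝ => t⁻¹ • (P t (T ε v) - T ε v)) (𝓝[>] (0 : ℝ))
        (𝓝 (-(L (T ε v)))))
    (u : E) (t : ℝ) (ht : 0 < t)
    (N : ℕ → ℕ) (hN : ∀ k, 0 < N k)
    (τ : (k : ℕ) → Fin (N k + 1) → ℝ)
    (hτmono : ∀ k, StrictMono (τ k))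
    (hτ0 : ∀ k, τ k 0 = 0)
    (hτlast : ∀ k, τ k (Fin.last (N k)) = t)
    (hmesh : Tendsto
      (fun k => ⨆ j : Fin (N k), (τ k j.succ - τ k j.castSucc)) atTop (𝓝 0)) :
    Tendsto
      (fun k =>
        ((List.ofFn (fun j : Fin (N k) => P (τ k j.succ - τ k j.castSucc))).foldr
          (· ∘L ·) (ContinuousLinearMap.id ℝ E)) u)
      atTop (𝓝 (T t u)) :=
  chernoff_proper_family_general T hT0 hTsemigroup hTcont D L hD hL hDdense P C δ hC hδ hPnorm
    hPgenerator u t N τ hτmono hτ0 hτlast hmesh
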